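/- Let m ≥ 2 and fix an integer k ≥ 2. Then the sets R_k(u) + ℤ, for integers u with 0 ≤ u < q_k, form a partition of ℝ: they are pairwise disjoint and their union is all of ℝ. -/
import Mathlib


noncomputable section

/-- Denominators of the convergents of `α = [0; 1, m, 1, m, …]`:
`q_0 = q_1 = 1`, `q_n = m·q_{n-1} + q_{n-2}` for even `n ≥ 2`, and
`q_n = q_{n-1} + q_{n-2}` for odd `n ≥ 3`. -/
def qseq (m : ℕ) : ℕ → ℕ
  | 0 => 1
  | 1 => 1
  | n + 2 => (if n % 2 = 0 then m else 1) * qseq m (n + 1) + qseq m n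

/-- `p_k(u) = (-1)^k u φ` where `φ = (m + 2 + √(m² + 4m))/2`. -/
def pk (m : ℕ) (k : ℕ) (u : ℤ) : ℝ :=
  (-1 : ℝ) ^ k * u * ((m + 2 + Real.sqrt (m ^ 2 + 4 * m)) / 2)

/-- The interval `A_k^{(1)}` (here `k₀ = ⌊k/2⌋`). -/
def A1 (m k : ℕ) : Set ℝ :=
  let d : ℝ := m ^ 2 + 4 * m
  let φ : ℝ := (m + 2 + Real.sqrt d) / 2
  let k₀ : ℕ := k / 2
  if k % 2 = 0 then
    Set.Ico ((m - Real.sqrt d) / (2 * φ ^ k₀)) (1 / φ ^ k₀)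
  else
    Set.Ico (-(1 / φ ^ (k₀ + 1))) ((-m + Real.sqrt d) / (2 * φ ^ k₀))

/-- The interval `A_k^{(2)}` (here `k₀ = ⌊k/2⌋`). -/
def A2 (m k : ℕ) : Set ℝ :=
  let d : ℝ := m ^ 2 + 4 * m
  let φ : ℝ := (m + 2 + Real.sqrt d) / 2
  let k₀ : ℕ := k / 2
  if k % 2 = 0 then
    Set.Ico ((m - Real.sqrt d) / (2 * φ ^ k₀)) (1 / φ ^ (k₀ + 1))
  else
    Set.Ico (-(1 / φ ^ (k₀ + 1))) ((-m - 1 + Real.sqrt d) / φ ^ k₀)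

/-- The set `R_k(u) = p_k(u) + A_k^{(1)}` for `0 ≤ u < q_{k-1}` and
`R_k(u) = p_k(u) + A_k^{(2)}` for `q_{k-1} ≤ u < q_k`. -/
def Rk (m k : ℕ) (u : ℕ) : Set ℝ :=
  (fun x => pk m k u + x) '' (if u < qseq m (k - 1) then A1 m k else A2 m k)

def pseq (m : ℕ) : ℕ → ℤ
  | 0 => 0
  | 1 => 1
  | n + 2 => (if n % 2 = 0 then (m : ℤ) else 1) * pseq m (n + 1) + pseq m n

lemma qseq_even (m j : ℕ) : qseq m (2 * j + 2) = m * qseq m (2 * j + 1) + qseq m (2 * j) := by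
  rw [show 2 * j + 2 = (2 * j) + 2 from rfl]
  simp [qseq, Nat.mul_mod_right]

lemma qseq_odd (m j : ℕ) : qseq m (2 * j + 3) = qseq m (2 * j + 2) + qseq m (2 * j + 1) := by
  have h : (2 * j + 1) % 2 = 1 := by omega
  rw [show 2 * j + 3 = (2 * j + 1) + 2 from rfl]
  simp [qseq, h]

lemma pseq_even (m j : ℕ) : pseq m (2 * j + 2) = m * pseq m (2 * j + 1) + pseq m (2 * j) := by
  rw [show 2 * j + 2 = (2 * j) + 2 from rfl]
  simp [pseq, Nat.mul_mod_right]

lemma pseq_odd (m j : ℕ) : pseq m (2 * j + 3) = pseq m (2 * j + 2) + pseq m (2 * j + 1) := by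
  have h : (2 * j + 1) % 2 = 1 := by omega
  rw [show 2 * j + 3 = (2 * j + 1) + 2 from rfl]
  simp [pseq, h]

lemma qseq_one_le (m : ℕ) (hm : 1 ≤ m) : ∀ n, 1 ≤ qseq m n := by
  intro n
  induction n using Nat.strong_induction_on with
  | _ n ih =>
    match n with
    | 0 => simp [qseq]
    | 1 => simp [qseq]
    | n + 2 =>
      have h1 := ih (n + 1) (by omega)
      have h0 := ih n (by omega)
      have hc : 1 ≤ (if n % 2 = 0 then m else 1) := by split <;> omega
      simp only [qseq]
      nlinarith

lemma qseq_lt (m : ℕ) (hm : 1 ≤ m) (n : ℕ) : qseq m (n + 1) < qseq m (n + 2) := by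
  have h1 := qseq_one_le m hm (n + 1)
  have h0 := qseq_one_le m hm n
  have hc : 1 ≤ (if n % 2 = 0 then m else 1) := by split <;> omega
  simp only [qseq]
  nlinarith

lemma qseq_coprime (m : ℕ) : ∀ n, Nat.Coprime (qseq m n) (qseq m (n + 1)) := by
  intro n
  induction n with
  | zero => simp [qseq, Nat.Coprime]
  | succ n ih =>
    have hq : qseq m (n + 2) = (if n % 2 = 0 then m else 1) * qseq m (n + 1) + qseq m n := rfl
    show Nat.gcd (qseq m (n + 1)) (qseq m (n + 2)) = 1
    rw [hq, Nat.add_comm ((if n % 2 = 0 then m else 1) * qseq m (n + 1)) (qseq m n),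
      Nat.gcd_add_mul_right_right]
    exact ih.symm

/-- Key approximation identity: q_n α − p_n. -/
lemma E_ident (m : ℕ) (a : ℝ) (ha : a ^ 2 = m - m * a) :
    ∀ j : ℕ, ((qseq m (2 * j) : ℝ) * a - pseq m (2 * j) = a * (1 - a) ^ j)
      ∧ ((qseq m (2 * j + 1) : ℝ) * a - pseq m (2 * j + 1) = -(1 - a) ^ (j + 1)) := by
  intro j
  induction j with
  | zero => norm_num [qseq, pseq]
  | succ j ih =>
    obtain ⟨h0, h1⟩ := ih
    have heven : ((qseq m (2 * (j + 1)) : ℝ)) = m * qseq m (2 * j + 1) + qseq m (2 * j) := by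
      rw [show 2 * (j + 1) = 2 * j + 2 from by ring, qseq_even]; push_cast; ring
    have hpeven : ((pseq m (2 * (j + 1)) : ℝ)) = m * pseq m (2 * j + 1) + pseq m (2 * j) := by
      rw [show 2 * (j + 1) = 2 * j + 2 from by ring, pseq_even]; push_cast; ring
    have hE : (qseq m (2 * (j + 1)) : ℝ) * a - pseq m (2 * (j + 1)) = a * (1 - a) ^ (j + 1) := by
      rw [heven, hpeven, pow_succ]
      linear_combination (m : ℝ) * h1 + h0 + (1 - a) ^ j * ha
    refine ⟨hE, ?_⟩
    have hodd : ((qseq m (2 * (j + 1) + 1) : ℝ)) = qseq m (2 * (j + 1)) + qseq m (2 * j + 1) := by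
      rw [show 2 * (j + 1) + 1 = 2 * j + 3 from by ring, qseq_odd,
        show 2 * j + 2 = 2 * (j + 1) from by ring]; push_cast; ring
    have hpodd : ((pseq m (2 * (j + 1) + 1) : ℝ)) = pseq m (2 * (j + 1)) + pseq m (2 * j + 1) := by
      rw [show 2 * (j + 1) + 1 = 2 * j + 3 from by ring, pseq_odd,
        show 2 * j + 2 = 2 * (j + 1) from by ring]; push_cast; ring
    rw [hodd, hpodd]
    rw [show (j + 1) + 1 = j + 2 from rfl, pow_succ, pow_succ]
    linear_combination hE + h1

/-- φ-power identity: q_{2j+2} + a q_{2j+1} = (m+1+a)^{j+1}. -/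
lemma F_ident (m : ℕ) (a : ℝ) (ha : a ^ 2 = m - m * a) :
    ∀ j : ℕ, ((qseq m (2 * j + 2) : ℝ) + a * qseq m (2 * j + 1)) = (m + 1 + a) ^ (j + 1) := by
  intro j
  induction j with
  | zero =>
    have : qseq m 2 = m + 1 := by simp [qseq]
    norm_num [this, qseq]
  | succ j ih =>
    have hq2 : ((qseq m (2 * (j + 1) + 2) : ℝ)) = m * qseq m (2 * j + 3) + qseq m (2 * j + 2) := by
      rw [show 2 * (j + 1) + 2 = 2 * (j + 1) + 2 from rfl, qseq_even,
        show 2 * (j + 1) + 1 = 2 * j + 3 from by ring, show 2 * (j + 1) = 2 * j + 2 from by ring]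
      push_cast; ring
    have hq3 : ((qseq m (2 * j + 3) : ℝ)) = qseq m (2 * j + 2) + qseq m (2 * j + 1) := by
      rw [qseq_odd]; push_cast; ring
    rw [show 2 * (j + 1) + 1 = 2 * j + 3 from by ring, hq2, hq3, pow_succ]
    linear_combination (m + 1 + a) * ih - (qseq m (2 * j + 1) : ℝ) * ha

/-- Abstract tiling lemma: a family of `Q` half-open intervals around the points
`u·γ mod 1`, chained by `u ↦ u - Q' mod Q`, tiles `ℝ` modulo `ℤ`. -/
lemma master_tiling (Q' Q : ℤ) (hQ'0 : 0 < Q') (hQ'Q : Q' < Q)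
    (hcop : IsCoprime Q Q') (γ A B : ℝ) (hA : 0 < A) (hB : 0 < B)
    (P' P : ℤ) (h1 : (Q' : ℝ) * γ = P' - A) (h2 : (Q : ℝ) * γ = P + B)
    (h3 : (Q : ℝ) * A + (Q' : ℝ) * B = 1)
    (T : ℕ → Set ℝ)
    (hT : ∀ u : ℕ, (u : ℤ) < Q → ∃ d : ℤ, T u =
      Set.Ico ((u : ℝ) * γ - B + d)
        ((u : ℝ) * γ - B + (A + (if (u : ℤ) < Q' then B else 0)) + d)) :
    (∀ u v : ℕ, (u : ℤ) < Q → (v : ℤ) < Q → u ≠ v →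
       Disjoint {x : ℝ | ∃ j : ℤ, x - j ∈ T u} {x : ℝ | ∃ j : ℤ, x - j ∈ T v}) ∧
    (∀ x : ℝ, ∃ u : ℕ, (u : ℤ) < Q ∧ ∃ j : ℤ, x - j ∈ T u) := by
  have hQ0 : 0 < Q := hQ'0.trans hQ'Q
  set uF : ℤ → ℤ := fun n => (-n * Q') % Q with huF
  set wF : ℤ → ℤ := fun n => -((-n * Q') / Q) with hwF
  have huw : ∀ n, uF n = wF n * Q - n * Q' := by
    intro n
    simp only [huF, hwF, Int.emod_def]
    ring
  have hu0 : ∀ n, 0 ≤ uF n := fun n => Int.emod_nonneg _ (ne_of_gt hQ0)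
  have huQ : ∀ n, uF n < Q := fun n => Int.emod_lt_of_pos _ hQ0
  have hwstep : ∀ n, wF (n + 1) = wF n + (if uF n < Q' then 1 else 0) := by
    intro n
    have e1 : uF (n + 1) = (uF n - Q') % Q := by
      have e : -(n + 1) * Q' = (uF n - Q') + (-(wF n)) * Q := by rw [huw n]; ring
      show (-(n + 1) * Q') % Q = _
      rw [e, Int.add_mul_emod_self_right]
    have a1 := huw (n + 1)
    by_cases h : uF n < Q'
    · have e2 : uF (n + 1) = uF n - Q' + Q := by
        have e3 : (uF n - Q') % Q = (uF n - Q' + Q) % Q := by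
          conv_rhs => rw [show uF n - Q' + Q = (uF n - Q') + 1 * Q from by ring,
            Int.add_mul_emod_self_right]
        rw [e1, e3]
        exact Int.emod_eq_of_lt (by have := hu0 n; omega) (by omega)
      rw [e2, huw n] at a1
      have hc : wF (n + 1) * Q = (wF n + 1) * Q := by linear_combination -a1
      simp only [h, if_true]
      exact mul_right_cancel₀ (ne_of_gt hQ0) hc
    · push_neg at h
      have e2 : uF (n + 1) = uF n - Q' := by
        rw [e1]
        exact Int.emod_eq_of_lt (by omega) (by have := huQ n; omega)
      rw [e2, huw n] at a1
      have hc : wF (n + 1) * Q = wF n * Q := by linear_combination -a1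
      simp only [not_lt.mpr h, if_false, add_zero]
      exact mul_right_cancel₀ (ne_of_gt hQ0) hc
  have hupern : ∀ n t : ℤ, uF (n + Q * t) = uF n := by
    intro n t
    have e : -(n + Q * t) * Q' = -n * Q' + (-(t * Q')) * Q := by ring
    show (-(n + Q * t) * Q') % Q = (-n * Q') % Q
    rw [e, Int.add_mul_emod_self_right]
  have hwpern : ∀ n t : ℤ, wF (n + Q * t) = wF n + Q' * t := by
    intro n t
    have a1 := huw (n + Q * t)
    rw [hupern n t, huw n] at a1
    have hc : wF (n + Q * t) * Q = (wF n + Q' * t) * Q := by linear_combination -a1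
    exact mul_right_cancel₀ (ne_of_gt hQ0) hc
  set L : ℤ → ℝ := fun n => (n : ℝ) * A + (wF n : ℝ) * B - B with hL
  have hL1 : ∀ n, L (n + 1) = L n + (A + (if uF n < Q' then B else 0)) := by
    intro n
    simp only [hL, hwstep n]
    by_cases h : uF n < Q' <;> simp only [h, if_true, if_false] <;> push_cast <;> ring
  have hLlt : ∀ n, L n < L (n + 1) := by
    intro n
    rw [hL1 n]
    by_cases h : uF n < Q' <;> simp only [h, if_true, if_false] <;> linarith
  have hLmono : StrictMono L := strictMono_int_of_lt_succ hLlt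
  have hLper : ∀ n t : ℤ, L (n + Q * t) = L n + t := by
    intro n t
    simp only [hL, hwpern n t]
    push_cast
    linear_combination (t : ℝ) * h3
  have htile : ∀ n : ℤ, ∃ c : ℤ, T (uF n).toNat = Set.Ico (L n + c) (L (n + 1) + c) := by
    intro n
    have hcast : ((uF n).toNat : ℤ) = uF n := Int.toNat_of_nonneg (hu0 n)
    obtain ⟨d, hd⟩ := hT (uF n).toNat (by rw [hcast]; exact huQ n)
    have hcastR : ((uF n).toNat : ℝ) = ((uF n : ℤ) : ℝ) := by exact_mod_cast hcast
    rw [hcast, hcastR] at hd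
    have hur : ((uF n : ℤ) : ℝ) = (wF n : ℝ) * (Q : ℝ) - (n : ℝ) * (Q' : ℝ) := by
      exact_mod_cast huw n
    refine ⟨d + (wF n * P - n * P'), ?_⟩
    have hleft : ((uF n : ℤ) : ℝ) * γ - B + d = L n + ((d : ℝ) + ((wF n : ℝ) * P - (n : ℝ) * P')) := by
      simp only [hL]
      linear_combination γ * hur + (wF n : ℝ) * h2 - (n : ℝ) * h1
    have hright : ((uF n : ℤ) : ℝ) * γ - B + (A + (if uF n < Q' then B else 0)) + d
        = L (n + 1) + ((d : ℝ) + ((wF n : ℝ) * P - (n : ℝ) * P')) := by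
      rw [hL1 n]
      linear_combination hleft
    have hcc : ((d + (wF n * P - n * P') : ℤ) : ℝ)
        = (d : ℝ) + ((wF n : ℝ) * P - (n : ℝ) * P') := by push_cast; ring
    rw [hd, hcc, ← hleft, ← hright]
  have hexist : ∀ u : ℕ, (u : ℤ) < Q → ∃ n : ℤ, uF n = (u : ℤ) := by
    intro u hu
    obtain ⟨aa, bb, hab⟩ := hcop
    refine ⟨-(u * bb), ?_⟩
    have e : -(-((u : ℤ) * bb)) * Q' = (u : ℤ) + (-((u : ℤ) * aa)) * Q := by
      linear_combination (u : ℤ) * hab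
    show (-(-((u : ℤ) * bb)) * Q') % Q = (u : ℤ)
    rw [e, Int.add_mul_emod_self_right]
    exact Int.emod_eq_of_lt (by positivity) hu
  have hmem : ∀ (u : ℕ), (u : ℤ) < Q → ∀ x : ℝ, ∀ j : ℤ, x - j ∈ T u →
      ∃ n : ℤ, uF n = (u : ℤ) ∧ L n ≤ x ∧ x < L (n + 1) := by
    intro u hu x j hxj
    obtain ⟨n₀, hn₀⟩ := hexist u hu
    obtain ⟨c, hc⟩ := htile n₀
    rw [hn₀, Int.toNat_natCast] at hc
    rw [hc, Set.mem_Ico] at hxj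
    refine ⟨n₀ + Q * (j + c), ?_, ?_, ?_⟩
    · rw [hupern, hn₀]
    · rw [hLper]; push_cast; linarith [hxj.1]
    · rw [show n₀ + Q * (j + c) + 1 = (n₀ + 1) + Q * (j + c) from by ring, hLper]
      push_cast; linarith [hxj.2]
  have huniq : ∀ a b : ℤ, ∀ x : ℝ, L a ≤ x → x < L (a + 1) → L b ≤ x → x < L (b + 1) → a = b := by
    intro a b x ha1 ha2 hb1 hb2
    by_contra hab
    rcases lt_or_gt_of_ne hab with h | h
    · have : L (a + 1) ≤ L b := hLmono.le_iff_le.mpr (by omega)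
      linarith
    · have : L (b + 1) ≤ L a := hLmono.le_iff_le.mpr (by omega)
      linarith
  constructor
  · intro u v hu hv huv
    rw [Set.disjoint_left]
    rintro x ⟨j, hxj⟩ ⟨j', hxj'⟩
    obtain ⟨n, hn, hl, hr⟩ := hmem u hu x j hxj
    obtain ⟨n', hn', hl', hr'⟩ := hmem v hv x j' hxj'
    have hnn : n = n' := huniq n n' x hl hr hl' hr'
    apply huv
    have : (u : ℤ) = (v : ℤ) := by rw [← hn, hnn, hn']
    exact_mod_cast this
  · intro x
    have hfind : ∀ (i : ℕ) (n : ℤ), L n ≤ x → x < L (n + (i : ℤ)) →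
        ∃ nn : ℤ, L nn ≤ x ∧ x < L (nn + 1) := by
      intro i
      induction i with
      | zero => intro n hx1 hx2; norm_num at hx2; linarith
      | succ i ih =>
        intro n hx1 hx2
        by_cases hx : x < L (n + 1)
        · exact ⟨n, hx1, hx⟩
        · push_neg at hx
          have e : n + ((i + 1 : ℕ) : ℤ) = (n + 1) + (i : ℤ) := by push_cast; ring
          rw [e] at hx2
          exact ih (n + 1) hx hx2
    set t := ⌊x - L 0⌋ with ht
    have hx1 : L (0 + Q * t) ≤ x := by
      rw [hLper]
      have := Int.floor_le (x - L 0)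
      rw [← ht] at this
      linarith
    have hx2 : x < L ((0 + Q * t) + (Q.toNat : ℤ)) := by
      rw [Int.toNat_of_nonneg hQ0.le,
        show 0 + Q * t + Q = 0 + Q * (t + 1) from by ring, hLper]
      have := Int.lt_floor_add_one (x - L 0)
      rw [← ht] at this
      push_cast
      linarith
    obtain ⟨nn, hnn1, hnn2⟩ := hfind Q.toNat (0 + Q * t) hx1 hx2
    obtain ⟨c, hc⟩ := htile nn
    refine ⟨(uF nn).toNat, by rw [Int.toNat_of_nonneg (hu0 nn)]; exact huQ nn, -c, ?_⟩
    rw [hc, Set.mem_Ico]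
    push_cast
    constructor <;> linarith

/-- For fixed `k ≥ 2`, the sets `R_k(u) + ℤ`, `0 ≤ u < q_k`, form a partition
of `ℝ`. -/
theorem Rk_partition (m : ℕ) (hm : 2 ≤ m) (k : ℕ) (hk : 2 ≤ k) :
    (∀ u v : ℕ, u < qseq m k → v < qseq m k → u ≠ v →
        Disjoint {x : ℝ | ∃ j : ℤ, x - j ∈ Rk m k u}
          {x : ℝ | ∃ j : ℤ, x - j ∈ Rk m k v}) ∧
      (⋃ u ∈ Finset.range (qseq m k), {x : ℝ | ∃ j : ℤ, x - j ∈ Rk m k u}) =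
        Set.univ := by
  have hm1 : (2 : ℝ) ≤ (m : ℝ) := by exact_mod_cast hm
  obtain ⟨a, hS, ha2, ha0, ha1⟩ :
      ∃ a : ℝ, Real.sqrt ((m : ℝ) ^ 2 + 4 * m) = 2 * a + m ∧
        a ^ 2 = (m : ℝ) - m * a ∧ 0 < a ∧ a < 1 := by
    have hd0 : (0 : ℝ) ≤ (m : ℝ) ^ 2 + 4 * m := by positivity
    have hS2 : Real.sqrt ((m : ℝ) ^ 2 + 4 * m) ^ 2 = (m : ℝ) ^ 2 + 4 * m := Real.sq_sqrt hd0
    have hSpos : 0 ≤ Real.sqrt ((m : ℝ) ^ 2 + 4 * m) := Real.sqrt_nonneg _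
    have hSgt : (m : ℝ) < Real.sqrt ((m : ℝ) ^ 2 + 4 * m) := by nlinarith
    have hSlt : Real.sqrt ((m : ℝ) ^ 2 + 4 * m) < (m : ℝ) + 2 := by nlinarith
    refine ⟨(Real.sqrt ((m : ℝ) ^ 2 + 4 * m) - m) / 2, by ring, by nlinarith, by linarith,
      by linarith⟩
  have hφpos : (0 : ℝ) < (m : ℝ) + 1 + a := by linarith
  have hφt : ((m : ℝ) + 1 + a) * (1 - a) = 1 := by linear_combination -ha2
  have hpowt : ∀ n : ℕ, ((m : ℝ) + 1 + a) ^ n * (1 - a) ^ n = 1 := by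
    intro n; rw [← mul_pow, hφt, one_pow]
  have htpos : ∀ n : ℕ, (0 : ℝ) < (1 - a) ^ n := fun n => pow_pos (by linarith) n
  have hppne : ∀ n : ℕ, ((m : ℝ) + 1 + a) ^ n ≠ 0 := fun n => (pow_pos hφpos n).ne'
  have h2ppne : ∀ n : ℕ, (2 * ((m : ℝ) + 1 + a) ^ n) ≠ 0 := fun n =>
    ne_of_gt (by have := pow_pos hφpos n; linarith)
  have hbase : ((m : ℝ) + 2 + (2 * a + m)) / 2 = (m : ℝ) + 1 + a := by ring
  have hcopZ : ∀ n : ℕ, IsCoprime ((qseq m (n + 1) : ℤ)) ((qseq m n : ℤ)) := by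
    intro n
    rw [Int.isCoprime_iff_gcd_eq_one, Int.gcd_natCast_natCast]
    exact (qseq_coprime m n).symm
  have einv : ∀ n : ℕ, (1 : ℝ) / ((m : ℝ) + 1 + a) ^ n = (1 - a) ^ n := by
    intro n
    rw [div_eq_iff (hppne n)]
    linear_combination -hpowt n
  have elo : ∀ n : ℕ, ((m : ℝ) - (2 * a + m)) / (2 * ((m : ℝ) + 1 + a) ^ n)
      = -(a * (1 - a) ^ n) := by
    intro n
    rw [div_eq_iff (h2ppne n)]
    linear_combination 2 * a * hpowt n
  have ehi : ∀ n : ℕ, (-(m : ℝ) + (2 * a + m)) / (2 * ((m : ℝ) + 1 + a) ^ n)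
      = a * (1 - a) ^ n := by
    intro n
    rw [div_eq_iff (h2ppne n)]
    linear_combination -2 * a * hpowt n
  have ehi2 : ∀ n : ℕ, (-(m : ℝ) - 1 + (2 * a + m)) / ((m : ℝ) + 1 + a) ^ n
      = (2 * a - 1) * (1 - a) ^ n := by
    intro n
    rw [div_eq_iff (hppne n)]
    linear_combination (1 - 2 * a) * hpowt n
  rcases Nat.even_or_odd k with hke | hko
  · -- even case : k = 2*k₀'+2
    obtain ⟨c, hc⟩ := hke
    obtain ⟨k₀', rfl⟩ : ∃ j, k = 2 * j + 2 := ⟨c - 1, by omega⟩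
    have hsub : 2 * k₀' + 2 - 1 = 2 * k₀' + 1 := by omega
    have hmod : (2 * k₀' + 2) % 2 = 0 := by omega
    have hdiv2 : (2 * k₀' + 2) / 2 = k₀' + 1 := by omega
    have hneg1 : ((-1 : ℝ)) ^ (2 * k₀' + 2) = 1 := Even.neg_one_pow ⟨k₀' + 1, by ring⟩
    have E1 := (E_ident m a ha2 k₀').2
    have E2 := (E_ident m a ha2 (k₀' + 1)).1
    rw [show 2 * (k₀' + 1) = 2 * k₀' + 2 from by ring] at E2
    have F1 := F_ident m a ha2 k₀'
    have hA1e : A1 m (2 * k₀' + 2) =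
        Set.Ico (-(a * (1 - a) ^ (k₀' + 1))) ((1 - a) ^ (k₀' + 1)) := by
      simp only [A1]
      rw [if_pos hmod, hdiv2, hS, hbase, elo, einv]
    have hA2e : A2 m (2 * k₀' + 2) =
        Set.Ico (-(a * (1 - a) ^ (k₀' + 1))) ((1 - a) ^ (k₀' + 1 + 1)) := by
      simp only [A2]
      rw [if_pos hmod, hdiv2, hS, hbase, elo, einv]
    have hpk : ∀ u : ℕ, pk m (2 * k₀' + 2) (u : ℤ) = (u : ℝ) * ((m : ℝ) + 1 + a) := by
      intro u
      simp only [pk, hS, hneg1, hbase]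
      push_cast
      ring
    obtain ⟨hdisj, hcov⟩ := master_tiling (qseq m (2 * k₀' + 1) : ℤ) (qseq m (2 * k₀' + 2) : ℤ)
      (by exact_mod_cast qseq_one_le m (by omega) (2 * k₀' + 1))
      (by exact_mod_cast qseq_lt m (by omega) (2 * k₀'))
      (hcopZ (2 * k₀' + 1))
      a ((1 - a) ^ (k₀' + 1)) (a * (1 - a) ^ (k₀' + 1))
      (htpos _) (mul_pos ha0 (htpos _))
      (pseq m (2 * k₀' + 1)) (pseq m (2 * k₀' + 2))
      (by push_cast; linear_combination E1)
      (by push_cast; linear_combination E2)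
      (by push_cast; linear_combination (1 - a) ^ (k₀' + 1) * F1 + hpowt (k₀' + 1))
      (Rk m (2 * k₀' + 2))
      (by
        intro u hu
        refine ⟨(u : ℤ) * (m + 1), ?_⟩
        by_cases hcase : u < qseq m (2 * k₀' + 1)
        · rw [if_pos (show (u : ℤ) < ((qseq m (2 * k₀' + 1) : ℕ) : ℤ) from by exact_mod_cast hcase)]
          simp only [Rk, hsub]
          rw [if_pos hcase, hA1e, Set.image_const_add_Ico, hpk]
          refine congrArg₂ Set.Ico ?_ ?_ <;> push_cast <;> ring
        · rw [if_neg (show ¬((u : ℤ) < ((qseq m (2 * k₀' + 1) : ℕ) : ℤ)) from by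
            simpa using hcase)]
          simp only [Rk, hsub]
          rw [if_neg hcase, hA2e, Set.image_const_add_Ico, hpk]
          refine congrArg₂ Set.Ico ?_ ?_ <;> push_cast <;> ring)
    constructor
    · intro u v hu hv huv
      exact hdisj u v (by exact_mod_cast hu) (by exact_mod_cast hv) huv
    · ext x
      simp only [Set.mem_iUnion, Set.mem_univ, iff_true, Finset.mem_range, Set.mem_setOf_eq]
      obtain ⟨u, hu, j, hj⟩ := hcov x
      exact ⟨u, by exact_mod_cast hu, j, hj⟩
  · -- odd case : k = 2*k₀'+3
    obtain ⟨c, hc⟩ := hko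
    obtain ⟨k₀', rfl⟩ : ∃ j, k = 2 * j + 3 := ⟨c - 1, by omega⟩
    have hsub : 2 * k₀' + 3 - 1 = 2 * k₀' + 2 := by omega
    have hmod : (2 * k₀' + 3) % 2 = 1 := by omega
    have hdiv2 : (2 * k₀' + 3) / 2 = k₀' + 1 := by omega
    have hneg1 : ((-1 : ℝ)) ^ (2 * k₀' + 3) = -1 := Odd.neg_one_pow ⟨k₀' + 1, by ring⟩
    have E2 := (E_ident m a ha2 (k₀' + 1)).1
    rw [show 2 * (k₀' + 1) = 2 * k₀' + 2 from by ring] at E2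
    have E3 := (E_ident m a ha2 (k₀' + 1)).2
    rw [show 2 * (k₀' + 1) + 1 = 2 * k₀' + 3 from by ring] at E3
    have F1 := F_ident m a ha2 k₀'
    have hq3 : ((qseq m (2 * k₀' + 3) : ℝ)) = qseq m (2 * k₀' + 2) + qseq m (2 * k₀' + 1) := by
      rw [qseq_odd]; push_cast; ring
    have hne : ¬((2 * k₀' + 3) % 2 = 0) := by omega
    have hA1o : A1 m (2 * k₀' + 3) =
        Set.Ico (-((1 - a) ^ (k₀' + 1 + 1))) (a * (1 - a) ^ (k₀' + 1)) := by
      simp only [A1]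
      rw [if_neg hne, hdiv2, hS, hbase, einv, ehi]
    have hA2o : A2 m (2 * k₀' + 3) =
        Set.Ico (-((1 - a) ^ (k₀' + 1 + 1))) ((2 * a - 1) * (1 - a) ^ (k₀' + 1)) := by
      simp only [A2]
      rw [if_neg hne, hdiv2, hS, hbase, einv, ehi2]
    have hpk : ∀ u : ℕ, pk m (2 * k₀' + 3) (u : ℤ) = -((u : ℝ) * ((m : ℝ) + 1 + a)) := by
      intro u
      simp only [pk, hS, hneg1, hbase]
      push_cast
      ring
    obtain ⟨hdisj, hcov⟩ := master_tiling (qseq m (2 * k₀' + 2) : ℤ) (qseq m (2 * k₀' + 3) : ℤ)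
      (by exact_mod_cast qseq_one_le m (by omega) (2 * k₀' + 2))
      (by exact_mod_cast qseq_lt m (by omega) (2 * k₀' + 1))
      (hcopZ (2 * k₀' + 2))
      (-a) (a * (1 - a) ^ (k₀' + 1)) ((1 - a) ^ (k₀' + 1 + 1))
      (mul_pos ha0 (htpos _)) (htpos _)
      (-pseq m (2 * k₀' + 2)) (-pseq m (2 * k₀' + 3))
      (by push_cast; linear_combination -E2)
      (by push_cast; linear_combination -E3)
      (by
        push_cast
        rw [hq3]
        linear_combination (1 - a) ^ (k₀' + 1) * F1 + hpowt (k₀' + 1))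
      (Rk m (2 * k₀' + 3))
      (by
        intro u hu
        refine ⟨-((u : ℤ) * (m + 1)), ?_⟩
        by_cases hcase : u < qseq m (2 * k₀' + 2)
        · rw [if_pos (show (u : ℤ) < ((qseq m (2 * k₀' + 2) : ℕ) : ℤ) from by exact_mod_cast hcase)]
          simp only [Rk, hsub]
          rw [if_pos hcase, hA1o, Set.image_const_add_Ico, hpk]
          refine congrArg₂ Set.Ico ?_ ?_ <;> push_cast <;> ring
        · rw [if_neg (show ¬((u : ℤ) < ((qseq m (2 * k₀' + 2) : ℕ) : ℤ)) from by
            simpa using hcase)]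
          simp only [Rk, hsub]
          rw [if_neg hcase, hA2o, Set.image_const_add_Ico, hpk]
          refine congrArg₂ Set.Ico ?_ ?_ <;> push_cast <;> ring)
    constructor
    · intro u v hu hv huv
      exact hdisj u v (by exact_mod_cast hu) (by exact_mod_cast hv) huv
    · ext x
      simp only [Set.mem_iUnion, Set.mem_univ, iff_true, Finset.mem_range, Set.mem_setOf_eq]
      obtain ⟨u, hu, j, hj⟩ := hcov x
      exact ⟨u, by exact_mod_cast hu, j, hj⟩

end
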